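/- arXiv:2007.00435 — 2 statements merged into one kernel-verified Lean document; each statement's English description precedes it below -/
import Mathlib

section
/- For a (0,1)-form ω on an almost complex manifold and real vector fields X, Y, the (2,0)-component of dω evaluated on (X,Y) equals (1/4)·ω(N(X,Y)). Concretely: (dω)(π_{1,0}X, π_{1,0}Y) = (1/4)·ω(N(X,Y)). -/
/-- For a (0,1)-form `ω` (a function-linear complex 1-form vanishing
on the `+i` eigenspace of `J`), the (2,0)-component of `dω` on real vector fields
`X, Y` equals `(1/4) ω(N(X,Y))`; concretely, with
`dω(U,V) = U(ω V) - V(ω U) - ω([U,V])`: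
`dω(π_{1,0}X, π_{1,0}Y) = (1/4) ω(N(X,Y))`. -/
theorem stmt10 {A : Type*} [CommRing A] [Algebra ℂ A]
    (J : Derivation ℂ A A →ₗ[ℂ] Derivation ℂ A A)
    (hJ : ∀ v, J (J v) = -v)
    (N : Derivation ℂ A A → Derivation ℂ A A → Derivation ℂ A A)
    (hN : ∀ X Y, N X Y = ⁅J X, J Y⁆ - J ⁅X, J Y⁆ - J ⁅J X, Y⁆ - ⁅X, Y⁆)
    (π10 : Derivation ℂ A A → Derivation ℂ A A)
    (hπ10 : ∀ v, π10 v = (1/2 : ℂ) • (v - Complex.I • J v))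
    (ω : Derivation ℂ A A →ₗ[A] A)
    (hω : ∀ Z : Derivation ℂ A A, J Z = Complex.I • Z → ω Z = 0)
    (X Y : Derivation ℂ A A) :
    (π10 X) (ω (π10 Y)) - (π10 Y) (ω (π10 X)) - ω ⁅π10 X, π10 Y⁆
      = (1/4 : ℂ) • ω (N X Y) := by
  -- `π10 v` lies in the `+i` eigenspace of `J`.
  have hπeig : ∀ v, J (π10 v) = Complex.I • π10 v := by
    intro v
    rw [hπ10]
    simp only [map_smul, map_sub, hJ]
    match_scalars <;> (try ring_nf) <;> (try rw [Complex.I_sq]) <;> (try norm_num)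
  -- hence `ω` vanishes on it.
  have hω10 : ∀ v, ω (π10 v) = 0 := fun v => hω _ (hπeig v)
  -- `ω ∘ J = -i ω`, since `J W + i W = 2i π10 W` is killed by `ω`.
  have hωJ : ∀ W, ω (J W) = -(Complex.I • ω W) := by
    intro W
    have h2 : J W + Complex.I • W = (2 * Complex.I) • π10 W := by
      rw [hπ10]
      match_scalars <;> (try ring_nf) <;> (try rw [Complex.I_sq]) <;> (try norm_num)
    have := congrArg ω h2
    rw [map_add, LinearMap.map_smul_of_tower, LinearMap.map_smul_of_tower,
      hω10, smul_zero, add_eq_zero_iff_eq_neg] at this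
    rw [this]
  rw [hω10, hω10, map_zero, map_zero, hπ10, hπ10, hN]
  simp only [smul_sub, lie_smul, smul_lie, lie_sub, sub_lie, map_sub, map_add,
    LinearMap.map_smul_of_tower, map_smul, hωJ, smul_smul, smul_neg, neg_smul,
    sub_zero, zero_sub]
  match_scalars <;> (try ring_nf) <;> (try rw [Complex.I_sq]) <;> (try norm_num)
end

section
/- Let J be an almost complex structure on an open set of ℝⁿ with matrix components J_i^p (so J(∂_i) = Σ_p J_i^p ∂_p and Σ_p J_i^p J_p^k = -δ_i^k). Then for each fixed i, the trace-type sum Σ_k N_{ik}^k = 0, where N_{ik}^r = Σ_p [J_i^p(∂_p J_k^r - ∂_k J_p^r) - J_k^p(∂_p J_i^r - ∂_i J_p^r)] are the components of the Nijenhuis tensor. -/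
open Finset

/-- Partial derivative `∂_p f` at `x` of a function on `ℝⁿ`. -/
noncomputable def pd {n : ℕ} (f : (Fin n → ℝ) → ℝ) (p : Fin n) (x : Fin n → ℝ) : ℝ :=
  fderiv ℝ f x (Pi.single p 1)

/-- Components of the Nijenhuis tensor in coordinates:
`N_{ik}^r = Σ_p [J_i^p(∂_p J_k^r - ∂_k J_p^r) - J_k^p(∂_p J_i^r - ∂_i J_p^r)]`. -/
noncomputable def Nc {n : ℕ} (J : (Fin n → ℝ) → Fin n → Fin n → ℝ)
    (i k r : Fin n) (x : Fin n → ℝ) : ℝ :=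
  ∑ p, (J x i p * (pd (fun y => J y k r) p x - pd (fun y => J y p r) k x)
      - J x k p * (pd (fun y => J y i r) p x - pd (fun y => J y p r) i x))

/-- For an almost complex structure `J` (`J² = -Id`) given in
coordinates on an open set of `ℝⁿ`, for each fixed `i`, `Σ_k N_{ik}^k = 0`. -/
theorem stmt15 {n : ℕ} (U : Set (Fin n → ℝ)) (hU : IsOpen U)
    (J : (Fin n → ℝ) → Fin n → Fin n → ℝ)
    (hJs : ∀ i p, ContDiffOn ℝ (⊤ : ℕ∞) (fun y => J y i p) U)
    (hJ2 : ∀ y ∈ U, ∀ i k, ∑ p, J y i p * J y p k = -(if i = k then (1 : ℝ) else 0))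
    (x : Fin n → ℝ) (hx : x ∈ U) (i : Fin n) :
    ∑ k, Nc J i k k x = 0 := by
  set M : Fin n → Fin n → ℝ := fun a b => J x a b with hM
  set D : Fin n → Fin n → Fin n → ℝ := fun a b q => pd (fun y => J y a b) q x with hD
  have hd : ∀ a b, DifferentiableAt ℝ (fun y => J y a b) x := fun a b =>
    (((hJs a b).contDiffAt (hU.mem_nhds hx)).differentiableAt (by simp))
  have hMM : ∀ a b, ∑ p, M a p * M p b = -(if a = b then (1 : ℝ) else 0) :=
    fun a b => hJ2 x hx a b
  -- key differentiated identity
  have hE : ∀ a b q, ∑ p, (D a p q * M p b + M a p * D p b q) = 0 := by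
    intro a b q
    have hder : HasFDerivAt (fun y => ∑ p, J y a p * J y p b)
        (∑ p, ((J x p b) • fderiv ℝ (fun y => J y a p) x
             + (J x a p) • fderiv ℝ (fun y => J y p b) x)) x := by
      apply HasFDerivAt.fun_sum
      intro p _
      have h1 := (hd a p).hasFDerivAt
      have h2 := (hd p b).hasFDerivAt
      have := h1.mul' h2
      -- h1.mul' h2 : HasFDerivAt (fun y => J y a p * J y p b)
      --   (J x a p • fderiv _ + fderiv _ • J x p b)... check form
      convert h1.mul h2 using 1
      · rfl
      · rfl
      · exact add_comm _ _
    have hev : (fun y => ∑ p, J y a p * J y p b)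
        =ᶠ[nhds x] (fun _ => -(if a = b then (1 : ℝ) else 0)) :=
      Filter.eventuallyEq_of_mem (hU.mem_nhds hx) (fun y hy => hJ2 y hy a b)
    have h0 : fderiv ℝ (fun y => ∑ p, J y a p * J y p b) x = 0 := by
      rw [hev.fderiv_eq]; exact fderiv_const_apply _
    rw [hder.fderiv] at h0
    have h0' := congrArg (fun L : (Fin n → ℝ) →L[ℝ] ℝ => L (Pi.single q 1)) h0
    simp only [ContinuousLinearMap.sum_apply, ContinuousLinearMap.add_apply,
      ContinuousLinearMap.smul_apply, ContinuousLinearMap.zero_apply, smul_eq_mul] at h0'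
    rw [← h0']
    apply Finset.sum_congr rfl
    intro p _
    simp only [hM, hD, pd]
    ring
  -- T fact : Σ_{k,p} M k p * D p k q = 0
  have hT : ∀ q, ∑ k, ∑ p, M k p * D p k q = 0 := by
    intro q
    have h1 : ∑ k, ∑ p, (D k p q * M p k + M k p * D p k q) = 0 := by
      simp [hE]
    have h2 : ∑ k, ∑ p, D k p q * M p k = ∑ k, ∑ p, M k p * D p k q := by
      rw [Finset.sum_comm]
      apply Finset.sum_congr rfl; intro k _
      apply Finset.sum_congr rfl; intro p _
      ring
    simp only [Finset.sum_add_distrib] at h1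
    linarith [h1, h2]
  -- representation D a m q = Σ_{b,p} M a p * D p b q * M b m
  have hrep : ∀ a m q, D a m q = ∑ b, ∑ p, M a p * D p b q * M b m := by
    intro a m q
    have h1 : ∑ b, (∑ p, (D a p q * M p b + M a p * D p b q)) * M b m = 0 := by
      apply Finset.sum_eq_zero; intro b _; rw [hE a b q]; ring
    have h2 : ∑ b, (∑ p, D a p q * M p b) * M b m = -D a m q := by
      have : ∑ b, (∑ p, D a p q * M p b) * M b m
          = ∑ p, D a p q * ∑ b, M p b * M b m := by
        simp only [Finset.sum_mul]
        rw [Finset.sum_comm]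
        apply Finset.sum_congr rfl; intro p _
        rw [Finset.mul_sum]
        apply Finset.sum_congr rfl; intro b _; ring
      rw [this]
      simp only [hMM]
      simp [mul_comm]
    simp only [Finset.sum_add_distrib, add_mul, Finset.sum_mul] at h1 ⊢
    have h2' : ∑ b, ∑ p, D a p q * M p b * M b m = -D a m q := by
      rw [← h2]
      apply Finset.sum_congr rfl; intro b _
      rw [Finset.sum_mul]
    linarith [h1, h2']
  -- trace fact : Σ_k D k k q = 0
  have htr : ∀ q, ∑ k, D k k q = 0 := by
    intro q
    have h1 : ∑ k, D k k q = ∑ k, ∑ b, ∑ p, M k p * D p b q * M b k := by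
      apply Finset.sum_congr rfl; intro k _; exact hrep k k q
    have h2 : ∑ k, ∑ b, ∑ p, M k p * D p b q * M b k
        = ∑ b, ∑ p, D p b q * ∑ k, M b k * M k p := by
      rw [Finset.sum_comm]
      apply Finset.sum_congr rfl; intro b _
      rw [Finset.sum_comm]
      apply Finset.sum_congr rfl; intro p _
      rw [Finset.mul_sum]
      apply Finset.sum_congr rfl; intro k _; ring
    have h3 : ∑ b, ∑ p, D p b q * ∑ k, M b k * M k p = -∑ k, D k k q := by
      simp only [hMM, mul_neg, mul_ite, mul_one, mul_zero]
      simp [Finset.sum_ite_eq]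
    have := h1.trans (h2.trans h3)
    linarith
  -- final combination
  have hgoal : ∑ k, Nc J i k k x
      = (∑ k, ∑ p, M i p * D k k p) - (∑ k, ∑ p, M i p * D p k k)
        - (∑ k, ∑ p, M k p * D i k p) + (∑ k, ∑ p, M k p * D p k i) := by
    simp only [Nc, hM, hD, ← Finset.sum_add_distrib, ← Finset.sum_sub_distrib]
    apply Finset.sum_congr rfl; intro k _
    apply Finset.sum_congr rfl; intro p _
    ring
  have F1 : ∑ k, ∑ p, M i p * D k k p = 0 := by
    rw [Finset.sum_comm]
    apply Finset.sum_eq_zero; intro p _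
    rw [← Finset.mul_sum, htr, mul_zero]
  have F4 : ∑ k, ∑ p, M k p * D p k i = 0 := hT i
  have F23 : (∑ k, ∑ p, M i p * D p k k) + (∑ k, ∑ p, M k p * D i k p) = 0 := by
    have h1 : ∑ k, ∑ p, (D i p k * M p k + M i p * D p k k) = 0 := by
      simp [hE]
    have h2 : ∑ k, ∑ p, M k p * D i k p = ∑ k, ∑ p, D i p k * M p k := by
      rw [Finset.sum_comm]
      apply Finset.sum_congr rfl; intro k _
      apply Finset.sum_congr rfl; intro p _
      ring
    simp only [Finset.sum_add_distrib] at h1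
    linarith
  rw [hgoal]
  linarith [F1, F4, F23]
end
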